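/- For every n ≥ 1 and every tree h ∈ H_c^n, the Lie-algebra evaluation satisfies X_h = (−2)^{|f(h)|_a} · 2^{|f(h)|_b} · X_c. -/
import Mathlib


/-! STATEMENT 8: for every `h ∈ H_c^n`, `X_h = (−2)^{|f(h)|_a}·2^{|f(h)|_b}·X_c`. -/

/-- The three-letter alphabet `A = {a, b, c}`. -/
inductive Letter : Type
  | a | b | c
deriving DecidableEq

/-- Words on the alphabet. -/
abbrev Word := List Letter

/-- The free magma `M(A)` on the alphabet: binary complete planar rooted trees
with leaves labelled by letters (fully parenthesized expressions). -/
inductive FM : Type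
  | leaf : Letter → FM
  | node : FM → FM → FM
deriving DecidableEq

/-- The foliage map `f : M(A) → A*` (drop all brackets). -/
def fol : FM → Word
  | FM.leaf d => [d]
  | FM.node t t' => fol t ++ fol t'

/-! ### The ordered families of trees `H_b^n`, `H_c^n`

Each level is built as a *sorted list* (increasing with respect to the total
order of the construction); across levels, trees of higher level (with more
leaves) are *smaller*.  The `H_c`-levels are produced by a single
table-building recursion. -/

/-- Table of the levels `H_c^1, …, H_c^n` (entry `i` is the sorted list of the
trees of `H_c^i`; entry `0` is empty).

* `H_c^1 = {c}`.
* For `m = 2k` even, `H_c^m = ⋃_{i=1}^{k} {(v,w) : v ∈ H_b^i, w ∈ H_c^{m−i}}`,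
  ordered lexicographically (`(v,w) < (v′,w′)` iff `v < v′`, or `v = v′` and
  `w < w′`; `v`'s with more leaves are smaller, so the blocks appear for
  `i = k, k−1, …, 1`), where `H_b^1 = {b}` and `H_b^i = {(a,v′) : v′ ∈ H_c^{i−1}}`.
* For `m = 2k+1` odd, additionally the block
  `E_k = {((a,v),w) : v, w ∈ H_c^k, v ≥ w}` is prepended (its elements are
  smaller than all other elements of `H_c^m`), ordered lexicographically in
  `(v,w)`. -/
def HClevels : ℕ → List (List FM)
  | 0 => [[]]
  | n + 1 =>
    let t := HClevels n
    let C : ℕ → List FM := fun i => t.getD i []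
    let m := n + 1
    let k := m / 2
    let prods : List FM :=
      (List.range k).flatMap (fun j =>
        let i := k - j
        if i = 1 then
          (C (m - 1)).map (fun w => FM.node (FM.leaf Letter.b) w)
        else
          (C (i - 1)).flatMap (fun v =>
            (C (m - i)).map (fun w =>
              FM.node (FM.node (FM.leaf Letter.a) v) w)))
    let Ck := C k
    let Ek : List FM :=
      (List.range Ck.length).flatMap (fun r =>
        (List.range (r + 1)).map (fun s =>
          FM.node (FM.node (FM.leaf Letter.a) (Ck.getD r (FM.leaf Letter.a)))
            (Ck.getD s (FM.leaf Letter.a))))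
    let Cm : List FM :=
      if m = 1 then [FM.leaf Letter.c]
      else if m % 2 = 0 then prods
      else Ek ++ prods
    t ++ [Cm]

/-- The level `H_c^n`, as a sorted (increasing) list of trees. -/
def HCn (n : ℕ) : List FM := (HClevels n).getD n []

/-- The level `H_b^n`, as a sorted (increasing) list of trees:
`H_b^1 = {b}` and `H_b^n = {(a,v) : v ∈ H_c^{n−1}}` with the inherited order. -/
def HBn : ℕ → List FM
  | 0 => []
  | 1 => [FM.leaf Letter.b]
  | n + 2 => (HCn (n + 1)).map (fun v => FM.node (FM.leaf Letter.a) v)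

/-- The level (number of leaves) of a tree. -/
def lev (h : FM) : ℕ := (fol h).length

/-- Position of a tree inside its level `H_c^{lev h}`. -/
def cIdx (h : FM) : ℕ := (HCn (lev h)).findIdx (fun x => decide (x = h))

/-- Position of a tree inside its level `H_b^{lev h}`. -/
def bIdx (h : FM) : ℕ := (HBn (lev h)).findIdx (fun x => decide (x = h))

/-- The strict total order on `H_c = ⋃_n H_c^n`: trees of higher level are
smaller, trees of the same level are compared by position in the sorted level. -/
def cLt (v w : FM) : Prop := lev w < lev v ∨ (lev v = lev w ∧ cIdx v < cIdx w)

/-- `v ≤ w` in `H_c`. -/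
def cLe (v w : FM) : Prop := cLt v w ∨ v = w

/-- The strict total order on `H_b = ⋃_n H_b^n`: trees of higher level are
smaller, trees of the same level are compared by position in the sorted level. -/
def bLt (v w : FM) : Prop := lev w < lev v ∨ (lev v = lev w ∧ bIdx v < bIdx w)

/-- `v ≤ w` in `H_b`. -/
def bLe (v w : FM) : Prop := bLt v w ∨ v = w

/-- The evaluation `M(A) → L`, `t ↦ X_t`, extending `d ↦ X_d` by
`X_{(t,t′)} = ⁅X_t, X_{t′}⁆`. -/
def Xev {L : Type*} [LieRing L] [LieAlgebra ℝ L] (X : Letter → L) : FM → L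
  | FM.leaf d => X d
  | FM.node t t' => ⁅Xev X t, Xev X t'⁆

section Aux

lemma HClevels_length (n : ℕ) : (HClevels n).length = n + 1 := by
  induction n with
  | zero => rfl
  | succ n ih => simp only [HClevels, List.length_append, ih, List.length_singleton]

lemma HClevels_getD (n i : ℕ) (h : i ≤ n) : (HClevels n).getD i [] = HCn i := by
  induction n with
  | zero => interval_cases i; rfl
  | succ n ih =>
    rcases Nat.lt_or_ge i (n+1) with hi | hi
    · rw [HClevels]
      show ((HClevels n) ++ [_]).getD i [] = _
      rw [List.getD_append _ _ _ _ (by rw [HClevels_length]; omega)]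
      exact ih (by omega)
    · have : i = n + 1 := by omega
      subst this; rfl

lemma mem_HBn_of_node {i : ℕ} (hi : 2 ≤ i) {v : FM} (hv : v ∈ HCn (i-1)) :
    FM.node (FM.leaf Letter.a) v ∈ HBn i := by
  obtain ⟨p, rfl⟩ : ∃ p, i = p + 2 := ⟨i - 2, by omega⟩
  simp only [HBn, List.mem_map]
  exact ⟨v, by simpa using hv, rfl⟩

lemma mem_HCn_structure {m : ℕ} (hm : 2 ≤ m) {h : FM} (hh : h ∈ HCn m) :
    ∃ i j v w, 1 ≤ i ∧ i < m ∧ 1 ≤ j ∧ j < m ∧ v ∈ HBn i ∧ w ∈ HCn j ∧ h = FM.node v w := by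
  obtain ⟨n, rfl⟩ : ∃ n, m = n + 1 := ⟨m - 1, by omega⟩
  have hh' : h ∈ (HClevels (n+1)).getD (n+1) [] := hh
  rw [HClevels] at hh'
  simp only [] at hh'
  rw [List.getD_append_right _ _ _ _ (by rw [HClevels_length])] at hh'
  rw [HClevels_length] at hh'
  simp only [Nat.sub_self, List.getD_cons_zero] at hh'
  rw [if_neg (by omega : ¬ n + 1 = 1)] at hh'
  have key : ∀ i, i ≤ n → (HClevels n).getD i [] = HCn i := fun i hi => HClevels_getD n i hi
  have hprods : ∀ (hp : h ∈ (List.range ((n+1)/2)).flatMap (fun j =>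
      if (n+1)/2 - j = 1 then
        ((HClevels n).getD (n+1-1) []).map (fun w => FM.node (FM.leaf Letter.b) w)
      else
        ((HClevels n).getD ((n+1)/2 - j - 1) []).flatMap (fun v =>
          ((HClevels n).getD (n+1-((n+1)/2-j)) []).map (fun w =>
            FM.node (FM.node (FM.leaf Letter.a) v) w)))),
      ∃ i j v w, 1 ≤ i ∧ i < n+1 ∧ 1 ≤ j ∧ j < n+1 ∧ v ∈ HBn i ∧ w ∈ HCn j ∧ h = FM.node v w := by
    intro hp
    rw [List.mem_flatMap] at hp
    obtain ⟨j, hj, hp⟩ := hp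
    rw [List.mem_range] at hj
    have hjk : (n+1)/2 - j ≥ 1 := by omega
    by_cases hij : (n+1)/2 - j = 1
    · rw [if_pos hij, List.mem_map] at hp
      obtain ⟨w, hw, rfl⟩ := hp
      simp only [Nat.add_sub_cancel] at hw
      rw [key n le_rfl] at hw
      exact ⟨1, n, _, _, le_refl 1, by omega, by omega, by omega,
        by simp [HBn], hw, rfl⟩
    · rw [if_neg hij, List.mem_flatMap] at hp
      obtain ⟨v, hv, hp⟩ := hp
      rw [List.mem_map] at hp
      obtain ⟨w, hw, rfl⟩ := hp
      set i := (n+1)/2 - j with hidef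
      have hi2 : 2 ≤ i := by omega
      have hile : i - 1 ≤ n := by omega
      rw [key (i-1) hile] at hv
      rw [key (n+1-i) (by omega)] at hw
      exact ⟨i, n+1-i, _, _, by omega, by omega, by omega, by omega,
        mem_HBn_of_node hi2 hv, hw, rfl⟩
  by_cases hpar : (n+1) % 2 = 0
  · rw [if_pos hpar] at hh'
    exact hprods hh'
  · rw [if_neg hpar] at hh'
    rcases List.mem_append.1 hh' with hE | hP
    · -- Ek case
      rw [List.mem_flatMap] at hE
      obtain ⟨r, hr, hE⟩ := hE
      rw [List.mem_range] at hr
      rw [List.mem_map] at hE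
      obtain ⟨s, hs, rfl⟩ := hE
      rw [List.mem_range] at hs
      set k := (n+1)/2 with hkdef
      have hk1 : 1 ≤ k := by omega
      have hkn : k ≤ n := by omega
      rw [key k hkn] at hr ⊢
      have hvmem : (HCn k).getD r (FM.leaf Letter.a) ∈ HCn k := by
        rw [List.getD_eq_getElem _ _ hr]; exact List.getElem_mem _
      have hwmem : (HCn k).getD s (FM.leaf Letter.a) ∈ HCn k := by
        rw [List.getD_eq_getElem _ _ (by omega)]; exact List.getElem_mem _
      refine ⟨k+1, k, _, _, by omega, by omega, by omega, by omega,
        mem_HBn_of_node (by omega) (by simpa using hvmem), hwmem, ?_⟩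
      simp [List.getD_eq_getElem?_getD]
    · exact hprods hP
  end Aux

/-- In a real Lie algebra with `⁅X_a,X_b⁆ = 2X_a`, `⁅X_a,X_c⁆ = −X_b`,
`⁅X_b,X_c⁆ = 2X_c`, every tree `h ∈ H_c^n` evaluates to
`X_h = (−2)^{|f(h)|_a}·2^{|f(h)|_b}·X_c`. -/
theorem Xev_mem_HCn {L : Type*} [LieRing L] [LieAlgebra ℝ L] (X : Letter → L)
    (hab : ⁅X Letter.a, X Letter.b⁆ = (2 : ℝ) • X Letter.a)
    (hac : ⁅X Letter.a, X Letter.c⁆ = -X Letter.b)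
    (hbc : ⁅X Letter.b, X Letter.c⁆ = (2 : ℝ) • X Letter.c) :
    ∀ n : ℕ, 1 ≤ n → ∀ h ∈ HCn n,
      Xev X h =
        ((-2 : ℝ) ^ ((fol h).count Letter.a) * (2 : ℝ) ^ ((fol h).count Letter.b)) •
          X Letter.c := by
  have key : ∀ n : ℕ,
      (∀ h ∈ HCn n, Xev X h =
        ((-2:ℝ) ^ ((fol h).count Letter.a) * (2:ℝ) ^ ((fol h).count Letter.b)) • X Letter.c) ∧
      (∀ h ∈ HBn n, Xev X h =
        ((-2:ℝ) ^ ((fol h).count Letter.a) * (2:ℝ) ^ ((fol h).count Letter.b) / 2) • X Letter.b) := by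
    intro n
    induction n using Nat.strong_induction_on with
    | _ n ih =>
      constructor
      · intro h hh
        rcases n with _ | _ | m
        · simp [HCn, HClevels] at hh
        · have : h = FM.leaf Letter.c := by simpa [HCn, HClevels] using hh
          subst this
          simp [Xev, fol]
        · obtain ⟨i, j, v, w, hi1, him, hj1, hjm, hv, hw, rfl⟩ :=
            mem_HCn_structure (by omega) hh
          have hB := (ih i (by omega)).2 v hv
          have hC := (ih j (by omega)).1 w hw
          show ⁅Xev X v, Xev X w⁆ = _
          rw [hB, hC, smul_lie, lie_smul, hbc, smul_smul, smul_smul]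
          simp only [fol]
          congr 1
          rw [List.count_append, List.count_append, pow_add, pow_add]
          ring
      · intro h hh
        rcases n with _ | _ | m
        · simp [HBn] at hh
        · have : h = FM.leaf Letter.b := by simpa [HBn] using hh
          subst this
          simp [Xev, fol]
        · simp only [HBn, List.mem_map] at hh
          obtain ⟨v, hv, rfl⟩ := hh
          have hC := (ih (m+1) (by omega)).1 v hv
          show ⁅X Letter.a, Xev X v⁆ = _
          rw [hC, lie_smul, hac, smul_neg, ← neg_smul]
          simp only [fol]
          congr 1
          have h1 : ([Letter.a] : Word).count Letter.a = 1 := rfl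
          have h2 : ([Letter.a] : Word).count Letter.b = 0 := rfl
          rw [List.count_append, List.count_append, h1, h2, pow_add, pow_add, pow_one, pow_zero]
          ring
  intro n _ h hh
  exact (key n).1 h hh
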